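/- Let Q₁ and Q₂ be G-equivariant symmetries on H and define, for i = 1,2, the set B_i = { M Q_i M* + K : M ∈ L(H) invertible and G-equivariant, K ∈ L(H) compact, selfadjoint and G-equivariant }. If B₁ ∩ B₂ ≠ ∅, then B₁ = B₂. -/

import Mathlib

open scoped RealInnerProductSpace

/-- A bounded selfadjoint operator is Fredholm iff its kernel is finite-dimensional
and its range is closed. -/
def IsFredholmOp {H : Type*} [NormedAddCommGroup H] [InnerProductSpace ℝ H]
    (T : H →L[ℝ] H) : Prop :=
  FiniteDimensional ℝ (LinearMap.ker (T : H →ₗ[ℝ] H)) ∧ IsClosed (LinearMap.range (T : H →ₗ[ℝ] H) : Set H)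

/-- The essential spectrum of a bounded selfadjoint operator: the set of real `μ` such that
`μ - T` is not Fredholm. -/
def essSpectrum {H : Type*} [NormedAddCommGroup H] [InnerProductSpace ℝ H]
    (T : H →L[ℝ] H) : Set ℝ :=
  {μ : ℝ | ¬ IsFredholmOp (μ • (1 : H →L[ℝ] H) - T)}

/-- Equivariance of a bounded operator with respect to an orthogonal representation `ρ`. -/
def IsEquivariant {H : Type*} [NormedAddCommGroup H] [InnerProductSpace ℝ H]
    {G : Type*} [Group G] (ρ : G →* (H ≃ₗᵢ[ℝ] H)) (T : H →L[ℝ] H) : Prop :=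
  ∀ (g : G) (u : H), T (ρ g u) = ρ g (T u)

/-- The set of operators of the form `M Q M* + K` with `M` invertible and `G`-equivariant and
`K` compact, selfadjoint and `G`-equivariant. -/
def cogredientOrbit {H : Type*} [NormedAddCommGroup H] [InnerProductSpace ℝ H] [CompleteSpace H]
    {G : Type*} [Group G] (ρ : G →* (H ≃ₗᵢ[ℝ] H)) (Q : H →L[ℝ] H) : Set (H →L[ℝ] H) :=
  {T | ∃ M K : H →L[ℝ] H, IsUnit M ∧ IsEquivariant ρ M ∧
    IsCompactOperator ⇑K ∧ IsSelfAdjoint K ∧ IsEquivariant ρ K ∧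
    T = M * Q * ContinuousLinearMap.adjoint M + K}

/-! Membership `T ∈ cogredientOrbit ρ Q` is an equivalence relation between `T` and `Q`: the
invertible equivariant operators form a group closed under adjoints, and conjugating a compact
selfadjoint equivariant operator by one of them keeps it compact, selfadjoint and equivariant.
Each `cogredientOrbit ρ Qᵢ` is thus an equivalence class, and two classes that meet coincide. -/

section

open ContinuousLinearMap

variable {H : Type*} [NormedAddCommGroup H] [InnerProductSpace ℝ H]
  {G : Type*} [Group G] {ρ : G →* (H ≃ₗᵢ[ℝ] H)}

namespace IsEquivariant

theorem mul {S T : H →L[ℝ] H} (hS : IsEquivariant ρ S) (hT : IsEquivariant ρ T) :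
    IsEquivariant ρ (S * T) := fun g u => by
  rw [mul_apply_eq_comp, mul_apply_eq_comp, hT, hS]

theorem add {S T : H →L[ℝ] H} (hS : IsEquivariant ρ S) (hT : IsEquivariant ρ T) :
    IsEquivariant ρ (S + T) := fun g u => by
  rw [add_apply, add_apply, hS, hT, map_add]

theorem neg {T : H →L[ℝ] H} (hT : IsEquivariant ρ T) : IsEquivariant ρ (-T) := fun g u => by
  rw [neg_apply, neg_apply, hT, map_neg]

theorem star [CompleteSpace H] {T : H →L[ℝ] H} (hT : IsEquivariant ρ T) :
    IsEquivariant ρ (star T) := fun g u => by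
  refine ext_inner_right ℝ fun v => ?_
  have hρ_symm : ⇑(ρ g).symm = ρ g⁻¹ := by rw [map_inv, LinearIsometryEquiv.coe_inv]
  simp only [star_eq_adjoint, adjoint_inner_left, LinearIsometryEquiv.inner_map_eq_flip, hρ_symm]
  rw [hT]

theorem units_inv {M : (H →L[ℝ] H)ˣ} (hM : IsEquivariant ρ M) : IsEquivariant ρ ↑M⁻¹ :=
  fun g u => by
  have hM_right_inv : (M : H →L[ℝ] H) ((↑M⁻¹ : H →L[ℝ] H) u) = u := by
    rw [← mul_apply_eq_comp, M.mul_inv, one_apply_eq_self]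
  have hM_left_inv : ∀ v, (↑M⁻¹ : H →L[ℝ] H) ((M : H →L[ℝ] H) v) = v := fun v => by
    rw [← mul_apply_eq_comp, M.inv_mul, one_apply_eq_self]
  conv_lhs => rw [← hM_right_inv, ← hM, hM_left_inv]

end IsEquivariant

variable [CompleteSpace H]

theorem cogredientOrbit_subset_of_mem {Q T : H →L[ℝ] H} (hT : T ∈ cogredientOrbit ρ Q) :
    cogredientOrbit ρ T ⊆ cogredientOrbit ρ Q := by
  rintro S ⟨N, L, hN, hNeq, hLc, hLsa, hLeq, rfl⟩
  obtain ⟨M, K, hM, hMeq, hKc, hKsa, hKeq, rfl⟩ := hT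
  refine ⟨N * M, N * K * star N + L, hN.mul hM, hNeq.mul hMeq,
    ((hKc.comp_clm _).clm_comp N).add hLc, (hKsa.conjugate N).add hLsa,
    ((hNeq.mul hKeq).mul hNeq.star).add hLeq, ?_⟩
  simp only [← star_eq_adjoint, star_mul]
  noncomm_ring

theorem mem_cogredientOrbit_symm {Q T : H →L[ℝ] H} (hT : T ∈ cogredientOrbit ρ Q) :
    Q ∈ cogredientOrbit ρ T := by
  obtain ⟨_, K, ⟨M, rfl⟩, hMeq, hKc, hKsa, hKeq, rfl⟩ := hT
  have hNeq : IsEquivariant ρ (↑M⁻¹ : H →L[ℝ] H) := hMeq.units_inv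
  refine ⟨↑M⁻¹, -((↑M⁻¹ : H →L[ℝ] H) * K * star (↑M⁻¹ : H →L[ℝ] H)), M⁻¹.isUnit, hNeq,
    ((hKc.comp_clm _).clm_comp _).neg, (hKsa.conjugate _).neg,
    ((hNeq.mul hKeq).mul hNeq.star).neg, ?_⟩
  have hstar : star (M : H →L[ℝ] H) * star (↑M⁻¹ : H →L[ℝ] H) = 1 := by
    rw [← star_mul, M.inv_mul, star_one]
  rw [← star_eq_adjoint, ← star_eq_adjoint]
  calc Q = (↑M⁻¹ * ↑M) * Q * (star (M : H →L[ℝ] H) * star (↑M⁻¹ : H →L[ℝ] H)) := by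
        rw [M.inv_mul, hstar, one_mul, mul_one]
    _ = _ := by noncomm_ring

theorem cogredientOrbit_eq_of_mem {Q T : H →L[ℝ] H} (hT : T ∈ cogredientOrbit ρ Q) :
    cogredientOrbit ρ T = cogredientOrbit ρ Q :=
  (cogredientOrbit_subset_of_mem hT).antisymm
    (cogredientOrbit_subset_of_mem (mem_cogredientOrbit_symm hT))

end

theorem stmt4_general
    {H : Type*} [NormedAddCommGroup H] [InnerProductSpace ℝ H] [CompleteSpace H]
    {G : Type*} [Group G]
    (ρ : G →* (H ≃ₗᵢ[ℝ] H))
    (Q₁ Q₂ : H →L[ℝ] H)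
    (hne : (cogredientOrbit ρ Q₁ ∩ cogredientOrbit ρ Q₂).Nonempty) :
    cogredientOrbit ρ Q₁ = cogredientOrbit ρ Q₂ := by
  obtain ⟨T, hT₁, hT₂⟩ := hne
  exact (cogredientOrbit_eq_of_mem hT₁).symm.trans (cogredientOrbit_eq_of_mem hT₂)

theorem stmt4
    {H : Type*} [NormedAddCommGroup H] [InnerProductSpace ℝ H] [CompleteSpace H]
    [TopologicalSpace.SeparableSpace H]
    {G : Type*} [Group G] [TopologicalSpace G] [IsTopologicalGroup G] [CompactSpace G]
    {EG : Type*} [NormedAddCommGroup EG] [NormedSpace ℝ EG]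
    {HG : Type*} [TopologicalSpace HG] {IG : ModelWithCorners ℝ EG HG}
    [ChartedSpace HG G] [LieGroup IG (⊤ : ℕ∞) G]
    (ρ : G →* (H ≃ₗᵢ[ℝ] H)) (hρ : ∀ u : H, Continuous fun g : G => ρ g u)
    (Q₁ Q₂ : H →L[ℝ] H)
    (hQ₁sa : IsSelfAdjoint Q₁) (hQ₁sq : Q₁ * Q₁ = 1) (hQ₁eq : IsEquivariant ρ Q₁)
    (hQ₂sa : IsSelfAdjoint Q₂) (hQ₂sq : Q₂ * Q₂ = 1) (hQ₂eq : IsEquivariant ρ Q₂)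
    (hne : (cogredientOrbit ρ Q₁ ∩ cogredientOrbit ρ Q₂).Nonempty) :
    cogredientOrbit ρ Q₁ = cogredientOrbit ρ Q₂ :=
  stmt4_general ρ Q₁ Q₂ hne
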